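/- For every real constant c, the function F(u) = 1/sin²(u) + c, defined for real u with sin(u) ≠ 0, satisfies the determinant functional equation: for all real x, y, z with x + y + z = 0 and sin(x), sin(y), sin(z) all nonzero, det [[1,1,1],[F(x),F(y),F(z)],[F′(x),F′(y),F′(z)]] = 0. -/

import Mathlib

open Real

/-- Derivative of `1/sin²+c`. -/
lemma deriv_one_div_sin_sq (c : ℝ) {u : ℝ} (hu : Real.sin u ≠ 0) :
    deriv (fun u => 1 / (Real.sin u) ^ 2 + c) u
      = -2 * Real.cos u / (Real.sin u) ^ 3 := by
  have h1 : HasDerivAt Real.sin (Real.cos u) u := Real.hasDerivAt_sin u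
  have h2 : HasDerivAt (fun u => Real.sin u ^ 2)
      (2 * Real.sin u ^ 1 * Real.cos u) u := by
    simpa using h1.fun_pow 2
  have h3 := (h2.inv (pow_ne_zero 2 hu)).add_const c
  have h4 : HasDerivAt (fun u => 1 / (Real.sin u) ^ 2 + c)
      (-(2 * Real.sin u ^ 1 * Real.cos u) / (Real.sin u ^ 2) ^ 2) u := by
    simpa [one_div] using h3
  rw [h4.deriv]
  field_simp

/-- Cotangent identity when `x + y + z = 0`. -/
lemma cot_sum_id {x y z : ℝ} (hx : Real.sin x ≠ 0) (hy : Real.sin y ≠ 0)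
    (hz : Real.sin z ≠ 0) (h : x + y + z = 0) :
    Real.cot x * Real.cot y + Real.cot y * Real.cot z + Real.cot z * Real.cot x = 1 := by
  have hzval : z = -x - y := by linarith
  rw [Real.cot_eq_cos_div_sin, Real.cot_eq_cos_div_sin, Real.cot_eq_cos_div_sin]
  field_simp
  subst hzval
  simp only [Real.sin_sub, Real.cos_sub, Real.sin_neg, Real.cos_neg]
  ring

lemma one_div_sin_sq (u : ℝ) (hu : Real.sin u ≠ 0) :
    1 / (Real.sin u) ^ 2 = Real.cot u ^ 2 + 1 := by
  rw [Real.cot_eq_cos_div_sin]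
  field_simp
  linarith [Real.sin_sq_add_cos_sq u]

lemma cos_div_sin_cube (u : ℝ) (hu : Real.sin u ≠ 0) :
    -2 * Real.cos u / (Real.sin u) ^ 3 = -2 * Real.cot u * (Real.cot u ^ 2 + 1) := by
  rw [Real.cot_eq_cos_div_sin]
  field_simp
  linear_combination (Real.cos u) * Real.cos_sq_add_sin_sq u

/-- For every real `c`, the function `F(u) = 1/sin²(u) + c` satisfies the
determinant functional equation at all `x, y, z` with `x + y + z = 0` where
`sin x, sin y, sin z ≠ 0`. -/
theorem det_eq_one_div_sin_sq_add_const (c : ℝ) :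
    ∀ x y z : ℝ, Real.sin x ≠ 0 → Real.sin y ≠ 0 → Real.sin z ≠ 0 →
      x + y + z = 0 →
      Matrix.det !![(1 : ℝ), 1, 1;
        1 / (Real.sin x) ^ 2 + c, 1 / (Real.sin y) ^ 2 + c,
          1 / (Real.sin z) ^ 2 + c;
        deriv (fun u => 1 / (Real.sin u) ^ 2 + c) x,
        deriv (fun u => 1 / (Real.sin u) ^ 2 + c) y,
        deriv (fun u => 1 / (Real.sin u) ^ 2 + c) z] = 0 := by
  intro x y z hx hy hz hsum
  rw [deriv_one_div_sin_sq c hx, deriv_one_div_sin_sq c hy, deriv_one_div_sin_sq c hz,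
    cos_div_sin_cube x hx, cos_div_sin_cube y hy, cos_div_sin_cube z hz,
    one_div_sin_sq x hx, one_div_sin_sq y hy, one_div_sin_sq z hz,
    Matrix.det_fin_three]
  norm_num [Matrix.cons_val_zero, Matrix.cons_val_one, Matrix.cons_val_two, Matrix.tail_cons, Matrix.head_cons]
  have h := cot_sum_id hx hy hz hsum
  set a := Real.cot x
  set b := Real.cot y
  set d := Real.cot z
  linear_combination (2 * (b*d*(b-d) - a*d*(a-d) + a*b*(a-b))) * h
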